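/- arXiv:2411.13506 — 3 statements merged into one kernel-verified Lean document; each statement's English description precedes it below -/
import Mathlib

section
/- Let p ∈ ℕ, let P_0, …, P_p ∈ ℝ^n be control points with associated Bézier curve B(t) = Σ_{j=0}^{p} (p choose j) t^j (1−t)^{p−j} P_j, and let a, b ∈ ℝ with a < b. Then there exist control points Q_0, …, Q_p ∈ ℝ^n such that for all t ∈ ℝ, B(a + (b − a)t) = Σ_{j=0}^{p} (p choose j) t^j (1−t)^{p−j} Q_j; that is, the affinely reparametrized segment of a Bézier curve of order p is again a Bézier curve of order p. -/
/-- The Bézier curve on `[0,1]` with control points `P 0, …, P p`. -/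
noncomputable def bezier {n p : ℕ} (P : Fin (p + 1) → (Fin n → ℝ)) (t : ℝ) : Fin n → ℝ :=
  ∑ j : Fin (p + 1), ((p.choose (j : ℕ) : ℝ) * t ^ (j : ℕ) * (1 - t) ^ (p - (j : ℕ))) • P j

/-!
Write `u = a + (b - a) t = a (1 - t) + b t`, so that `1 - u = (1 - a) (1 - t) + (1 - b) t`.
Then `u^ν (1 - u)^(p - ν)` is a product of `p` linear forms in `1 - t` and `t`. Such
forms lie in the span of the Bernstein basis of order `1`, and the product of Bernstein
polynomials of orders `p` and `q` is a multiple of one of order `p + q`, so every reparametrized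
Bernstein polynomial of order `p` is a combination of Bernstein polynomials of order `p`.
Collecting coefficients gives the new control points.
-/

open Polynomial

section

variable (K : Type*) [Field K]

noncomputable def bernsteinSpan (p : ℕ) : Submodule K K[X] :=
  Submodule.span K (Set.range fun ν : Fin (p + 1) => bernsteinPolynomial K p ν)

variable {K}

theorem bernsteinPolynomial_mem_bernsteinSpan {p ν : ℕ} (h : ν ≤ p) :
    bernsteinPolynomial K p ν ∈ bernsteinSpan K p :=
  Submodule.subset_span ⟨⟨ν, Nat.lt_succ_of_le h⟩, rfl⟩

theorem mem_bernsteinSpan_iff {p : ℕ} {f : K[X]} :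
    f ∈ bernsteinSpan K p ↔ ∃ c : Fin (p + 1) → K, ∑ ν, c ν • bernsteinPolynomial K p ν = f :=
  Submodule.mem_span_range_iff_exists_fun K

theorem one_mem_bernsteinSpan_zero : (1 : K[X]) ∈ bernsteinSpan K 0 := by
  simpa [bernsteinPolynomial] using bernsteinPolynomial_mem_bernsteinSpan (K := K) (p := 0) le_rfl

theorem C_mul_one_sub_X_add_C_mul_X_mem_bernsteinSpan_one (α β : K) :
    C α * (1 - X) + C β * X ∈ bernsteinSpan K 1 := by
  have h₀ : bernsteinPolynomial K 1 0 = 1 - X := by simp [bernsteinPolynomial]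
  have h₁ : bernsteinPolynomial K 1 1 = X := by simp [bernsteinPolynomial]
  rw [← h₀, ← h₁, ← smul_eq_C_mul, ← smul_eq_C_mul]
  exact add_mem (Submodule.smul_mem _ α (bernsteinPolynomial_mem_bernsteinSpan zero_le_one))
    (Submodule.smul_mem _ β (bernsteinPolynomial_mem_bernsteinSpan le_rfl))

theorem exists_sum_eval_smul_eq_of_mem_bernsteinSpan {ι E : Type*} [Fintype ι]
    [AddCommMonoid E] [Module K E] {p : ℕ} {f : ι → K[X]} (hf : ∀ i, f i ∈ bernsteinSpan K p)
    (P : ι → E) : ∃ Q : Fin (p + 1) → E, ∀ t : K,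
      ∑ i, (f i).eval t • P i = ∑ j : Fin (p + 1), (bernsteinPolynomial K p j).eval t • Q j := by
  choose c hc using fun i => mem_bernsteinSpan_iff.1 (hf i)
  refine ⟨fun j => ∑ i, c i j • P i, fun t => ?_⟩
  simp only [← hc, eval_finsetSum, eval_smul, smul_eq_mul, Finset.sum_smul, Finset.smul_sum,
    mul_smul]
  rw [Finset.sum_comm]
  exact Finset.sum_congr rfl fun _ _ => Finset.sum_congr rfl fun _ _ => smul_comm _ _ _

variable [CharZero K]

theorem bernsteinPolynomial_mul {p q i j : ℕ} (hi : i ≤ p) (hj : j ≤ q) :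
    bernsteinPolynomial K p i * bernsteinPolynomial K q j =
      ((p.choose i * q.choose j : K) / (p + q).choose (i + j)) •
        bernsteinPolynomial K (p + q) (i + j) := by
  have hchoose : ((p + q).choose (i + j) : K) ≠ 0 := by
    exact_mod_cast (Nat.choose_pos (Nat.add_le_add hi hj)).ne'
  have hcancel : C ((p.choose i * q.choose j : K) / (p + q).choose (i + j)) *
      C ((p + q).choose (i + j) : K) = C (p.choose i : K) * C (q.choose j : K) := by
    rw [← map_mul, div_mul_cancel₀ _ hchoose, map_mul]
  have hexp : p + q - (i + j) = (p - i) + (q - j) := by omega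
  simp only [bernsteinPolynomial, smul_eq_C_mul, ← C_eq_natCast, hexp, pow_add]
  linear_combination (-(X ^ i * X ^ j) * ((1 - X) ^ (p - i) * (1 - X) ^ (q - j)) : K[X]) * hcancel

theorem bernsteinSpan_mul_le (p q : ℕ) :
    bernsteinSpan K p * bernsteinSpan K q ≤ bernsteinSpan K (p + q) := by
  rw [bernsteinSpan, bernsteinSpan, Submodule.span_mul_span, Submodule.span_le]
  rintro _ ⟨_, ⟨i, rfl⟩, _, ⟨j, rfl⟩, rfl⟩
  dsimp only
  rw [bernsteinPolynomial_mul (i.is_le) (j.is_le)]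
  exact Submodule.smul_mem _ _ (bernsteinPolynomial_mem_bernsteinSpan
    (Nat.add_le_add (i.is_le) (j.is_le)))

theorem mul_mem_bernsteinSpan {p q : ℕ} {f g : K[X]} (hf : f ∈ bernsteinSpan K p)
    (hg : g ∈ bernsteinSpan K q) : f * g ∈ bernsteinSpan K (p + q) :=
  bernsteinSpan_mul_le p q (Submodule.mul_mem_mul hf hg)

theorem pow_mem_bernsteinSpan {f : K[X]} (hf : f ∈ bernsteinSpan K 1) (k : ℕ) :
    f ^ k ∈ bernsteinSpan K k := by
  induction k with
  | zero => simpa using one_mem_bernsteinSpan_zero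
  | succ k ih => simpa [pow_succ] using mul_mem_bernsteinSpan ih hf

theorem bernsteinPolynomial_comp_mem_bernsteinSpan {p ν : ℕ} (h : ν ≤ p) (α β : K) :
    (bernsteinPolynomial K p ν).comp (C α * (1 - X) + C β * X) ∈ bernsteinSpan K p := by
  have hcomp : (bernsteinPolynomial K p ν).comp (C α * (1 - X) + C β * X) =
      (p.choose ν : K) • ((C α * (1 - X) + C β * X) ^ ν *
        (C (1 - α) * (1 - X) + C (1 - β) * X) ^ (p - ν)) := by
    simp only [bernsteinPolynomial, smul_eq_C_mul, map_sub, map_one, mul_comp, natCast_comp,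
      pow_comp, X_comp, sub_comp, one_comp, C_eq_natCast]
    ring
  have hmem := mul_mem_bernsteinSpan
    (pow_mem_bernsteinSpan (C_mul_one_sub_X_add_C_mul_X_mem_bernsteinSpan_one α β) ν)
    (pow_mem_bernsteinSpan (C_mul_one_sub_X_add_C_mul_X_mem_bernsteinSpan_one (1 - α) (1 - β))
      (p - ν))
  rw [Nat.add_sub_cancel' h] at hmem
  exact hcomp ▸ Submodule.smul_mem _ _ hmem

end

theorem bezier_eq_sum_eval_bernsteinPolynomial {n p : ℕ} (P : Fin (p + 1) → (Fin n → ℝ))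
    (t : ℝ) : bezier P t = ∑ j : Fin (p + 1), (bernsteinPolynomial ℝ p j).eval t • P j := by
  simp [bezier, bernsteinPolynomial]

theorem bezier_splitting_general {n p : ℕ} (P : Fin (p + 1) → (Fin n → ℝ)) (a b : ℝ) :
    ∃ Q : Fin (p + 1) → (Fin n → ℝ),
      ∀ t : ℝ, bezier P (a + (b - a) * t) = bezier Q t := by
  obtain ⟨Q, hQ⟩ := exists_sum_eval_smul_eq_of_mem_bernsteinSpan
    (fun ν : Fin (p + 1) => bernsteinPolynomial_comp_mem_bernsteinSpan ν.is_le a b) P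
  refine ⟨Q, fun t => ?_⟩
  have hL : (C a * (1 - X) + C b * X).eval t = a + (b - a) * t := by
    simp only [eval_add, eval_mul, eval_C, eval_sub, eval_one, eval_X]
    ring
  simpa [bezier_eq_sum_eval_bernsteinPolynomial, eval_comp, hL] using hQ t

/-- Splitting property: the affinely reparametrized segment `t ↦ B(a + (b - a) t)` of a
Bézier curve of order `p` is again a Bézier curve of order `p` for some control points
`Q_0, …, Q_p`. -/
theorem bezier_splitting {n p : ℕ} (P : Fin (p + 1) → (Fin n → ℝ)) (a b : ℝ) (hab : a < b) :
    ∃ Q : Fin (p + 1) → (Fin n → ℝ),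
      ∀ t : ℝ, bezier P (a + (b - a) * t) = bezier Q t :=
  bezier_splitting_general P a b
end

section
/- Equip ℝ^N, ℝ^n, ℝ^m, ℝ^M with the supremum (ℓ∞) norm. Let k : ℝ^N × ℝ^n × ℝ^m → ℝ^M satisfy ‖k(x, y, u) − k(x', y', u')‖ ≤ L_k (‖x − x'‖ + ‖y − y'‖ + ‖u − u'‖) for all arguments, let Ψ : ℝ^n → ℝ^N be Lipschitz with constant L_Ψ, and let e : ℝ^m → ℝ be a nonnegative function that is Lipschitz with constant L_e. Let u_max > 0, let x ∈ ℝ^N, x_d, x̄_d ∈ ℝ^n, u_d ∈ ℝ^m, and suppose the tracking bound ‖x − Ψ(x_d)‖ ≤ e(u_d) holds. If L_k (1 + L_Ψ) ‖x_d − x̄_d‖ + L_k (1 + L_e) ‖u_d‖ ≤ u_max − ‖k(Ψ(x̄_d), x̄_d, 0)‖ − L_k e(0), then ‖k(x, x_d, u_d)‖ ≤ u_max. -/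
/-! Compare `k x x_d u_d` with the reference input `k (Ψ x̄_d) x̄_d 0` through the Lipschitz
bound of `k`. The state error `‖x - Ψ x̄_d‖` is at most `e u_d + L_Ψ ‖x_d - x̄_d‖`, and
`e u_d ≤ e 0 + L_e ‖u_d‖`; collecting terms, the constraint is exactly the statement that
this Lipschitz estimate stays below `u_max`. -/

theorem le_add_mul_norm_sub_of_abs_sub_le {E : Type*} [SeminormedAddGroup E] {e : E → ℝ}
    {L : ℝ} (he : ∀ u u', |e u - e u'| ≤ L * ‖u - u'‖) (u v : E) :
    e u ≤ e v + L * ‖u - v‖ := by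
  linarith [le_abs_self (e u - e v), he u v]

theorem norm_sub_le_of_norm_sub_le_of_lipschitz {E F : Type*} [SeminormedAddCommGroup E]
    [SeminormedAddGroup F] {Ψ : F → E} {L r : ℝ} (hΨ : ∀ y y', ‖Ψ y - Ψ y'‖ ≤ L * ‖y - y'‖)
    {x : E} {y y' : F} (hx : ‖x - Ψ y‖ ≤ r) :
    ‖x - Ψ y'‖ ≤ r + L * ‖y - y'‖ :=
  (norm_sub_le_norm_sub_add_norm_sub x (Ψ y) (Ψ y')).trans (add_le_add hx (hΨ y y'))

theorem input_constraint_satisfaction_general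
    {N n m M : ℕ}
    (k : (Fin N → ℝ) → (Fin n → ℝ) → (Fin m → ℝ) → (Fin M → ℝ))
    (Ψ : (Fin n → ℝ) → (Fin N → ℝ)) (e : (Fin m → ℝ) → ℝ)
    (Lk LΨ Le : ℝ) (hLk : 0 ≤ Lk)
    (hk : ∀ x x' y y' u u', ‖k x y u - k x' y' u'‖ ≤ Lk * (‖x - x'‖ + ‖y - y'‖ + ‖u - u'‖))
    (hΨ : ∀ y y', ‖Ψ y - Ψ y'‖ ≤ LΨ * ‖y - y'‖)
    (he : ∀ u u', |e u - e u'| ≤ Le * ‖u - u'‖)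
    (umax : ℝ)
    (x : Fin N → ℝ) (xd xbar : Fin n → ℝ) (ud : Fin m → ℝ)
    (htrack : ‖x - Ψ xd‖ ≤ e ud)
    (hconstraint : Lk * (1 + LΨ) * ‖xd - xbar‖ + Lk * (1 + Le) * ‖ud‖ ≤
      umax - ‖k (Ψ xbar) xbar 0‖ - Lk * e 0) :
    ‖k x xd ud‖ ≤ umax := by
  have hstate : ‖x - Ψ xbar‖ ≤ e 0 + Le * ‖ud‖ + LΨ * ‖xd - xbar‖ := by
    have hud := le_add_mul_norm_sub_of_abs_sub_le he ud 0
    rw [sub_zero] at hud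
    exact (norm_sub_le_of_norm_sub_le_of_lipschitz hΨ htrack).trans (by gcongr)
  calc ‖k x xd ud‖
      ≤ ‖k (Ψ xbar) xbar 0‖ + ‖k x xd ud - k (Ψ xbar) xbar 0‖ := norm_le_norm_add_norm_sub' _ _
    _ ≤ ‖k (Ψ xbar) xbar 0‖ + Lk * (‖x - Ψ xbar‖ + ‖xd - xbar‖ + ‖ud - 0‖) := by
        gcongr; exact hk ..
    _ ≤ ‖k (Ψ xbar) xbar 0‖ +
          Lk * (e 0 + Le * ‖ud‖ + LΨ * ‖xd - xbar‖ + ‖xd - xbar‖ + ‖ud‖) := by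
        rw [sub_zero]; gcongr
    _ = ‖k (Ψ xbar) xbar 0‖ + Lk * e 0 +
          (Lk * (1 + LΨ) * ‖xd - xbar‖ + Lk * (1 + Le) * ‖ud‖) := by ring
    _ ≤ umax := by linarith

/-- Lemma 1 (input constraint satisfaction): with all spaces carrying the sup norm, if the
tracking controller `k` is Lipschitz, `Ψ` is Lipschitz, the tracking-certificate bound `e`
is nonnegative and Lipschitz, the closed-loop state satisfies `‖x - Ψ(x_d)‖ ≤ e(u_d)`, and
`L_k (1 + L_Ψ) ‖x_d - x̄_d‖ + L_k (1 + L_e) ‖u_d‖ ≤ u_max - ‖k(Ψ(x̄_d), x̄_d, 0)‖ - L_k e(0)`,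
then `‖k(x, x_d, u_d)‖ ≤ u_max`. -/
theorem input_constraint_satisfaction
    {N n m M : ℕ}
    (k : (Fin N → ℝ) → (Fin n → ℝ) → (Fin m → ℝ) → (Fin M → ℝ))
    (Ψ : (Fin n → ℝ) → (Fin N → ℝ)) (e : (Fin m → ℝ) → ℝ)
    (Lk LΨ Le : ℝ) (hLk : 0 ≤ Lk) (hLΨ : 0 ≤ LΨ) (hLe : 0 ≤ Le)
    (hk : ∀ x x' y y' u u', ‖k x y u - k x' y' u'‖ ≤ Lk * (‖x - x'‖ + ‖y - y'‖ + ‖u - u'‖))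
    (hΨ : ∀ y y', ‖Ψ y - Ψ y'‖ ≤ LΨ * ‖y - y'‖)
    (he_nonneg : ∀ u, 0 ≤ e u)
    (he : ∀ u u', |e u - e u'| ≤ Le * ‖u - u'‖)
    (umax : ℝ) (humax : 0 < umax)
    (x : Fin N → ℝ) (xd xbar : Fin n → ℝ) (ud : Fin m → ℝ)
    (htrack : ‖x - Ψ xd‖ ≤ e ud)
    (hconstraint : Lk * (1 + LΨ) * ‖xd - xbar‖ + Lk * (1 + Le) * ‖ud‖ ≤
      umax - ‖k (Ψ xbar) xbar 0‖ - Lk * e 0) :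
    ‖k x xd ud‖ ≤ umax :=
  input_constraint_satisfaction_general k Ψ e Lk LΨ Le hLk hk hΨ he umax x xd xbar ud htrack
    hconstraint
end

section
/- Let ℝ^N and ℝ^n carry the Euclidean norm and ℝ^m the supremum norm. Let Π : ℝ^N → ℝ^n be Lipschitz with constant L_Π, let Ψ : ℝ^n → ℝ^N satisfy Π(Ψ(y)) = y for all y, and let e : ℝ^m → ℝ be a nonnegative function that is Lipschitz with constant L_e. Let x_cl ∈ ℝ^N, x_d ∈ ℝ^n, u_d ∈ ℝ^m satisfy the tracking bound ‖x_cl − Ψ(x_d)‖ ≤ e(u_d). Let c_1, …, c_k ∈ ℝ^n and d_1, …, d_k ∈ ℝ. If for every i, ⟨c_i, x_d⟩ + L_Π (L_e ‖u_d‖ + e(0)) ‖c_i‖ ≤ d_i, then ⟨c_i, Π(x_cl)⟩ ≤ d_i for every i. -/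
open scoped RealInnerProductSpace

theorem real_inner_le_add_mul_norm_of_norm_sub_le {E : Type*} [NormedAddCommGroup E]
    [InnerProductSpace ℝ E] (c : E) {x y : E} {r : ℝ} (hxy : ‖y - x‖ ≤ r) :
    ⟪c, y⟫ ≤ ⟪c, x⟫ + r * ‖c‖ :=
  calc ⟪c, y⟫ = ⟪c, x⟫ + ⟪c, y - x⟫ := by rw [inner_sub_right]; ring
    _ ≤ ⟪c, x⟫ + ‖c‖ * ‖y - x‖ := by gcongr; exact real_inner_le_norm c (y - x)
    _ ≤ ⟪c, x⟫ + r * ‖c‖ := by nlinarith [norm_nonneg c]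

theorem le_mul_norm_add_of_abs_sub_le {E : Type*} [SeminormedAddCommGroup E] {f : E → ℝ}
    {L : ℝ} (hf : ∀ u u', |f u - f u'| ≤ L * ‖u - u'‖) (u : E) :
    f u ≤ L * ‖u‖ + f 0 := by
  have h := (le_abs_self _).trans (hf u 0)
  rw [sub_zero] at h
  linarith

theorem norm_sub_le_of_lipschitz_of_rightInverse {X Y : Type*} [SeminormedAddCommGroup X]
    [SeminormedAddCommGroup Y] {proj : X → Y} {emb : Y → X} {L : ℝ}
    (hproj : ∀ x x', ‖proj x - proj x'‖ ≤ L * ‖x - x'‖) (hright : ∀ y, proj (emb y) = y)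
    (x : X) (y : Y) : ‖proj x - y‖ ≤ L * ‖x - emb y‖ := by
  simpa only [hright] using hproj x (emb y)

theorem state_constraint_satisfaction_general
    {N n m k : ℕ}
    (proj : EuclideanSpace ℝ (Fin N) → EuclideanSpace ℝ (Fin n))
    (emb : EuclideanSpace ℝ (Fin n) → EuclideanSpace ℝ (Fin N))
    (e : (Fin m → ℝ) → ℝ)
    (Lproj Le : ℝ) (hLproj : 0 ≤ Lproj)
    (hproj : ∀ x y, ‖proj x - proj y‖ ≤ Lproj * ‖x - y‖)
    (hright : ∀ y, proj (emb y) = y)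
    (he : ∀ u u', |e u - e u'| ≤ Le * ‖u - u'‖)
    (xcl : EuclideanSpace ℝ (Fin N)) (xd : EuclideanSpace ℝ (Fin n)) (ud : Fin m → ℝ)
    (htrack : ‖xcl - emb xd‖ ≤ e ud)
    (c : Fin k → EuclideanSpace ℝ (Fin n)) (d : Fin k → ℝ)
    (hcon : ∀ i, ⟪c i, xd⟫ + Lproj * (Le * ‖ud‖ + e 0) * ‖c i‖ ≤ d i) :
    ∀ i, ⟪c i, proj xcl⟫ ≤ d i := by
  have hdist : ‖proj xcl - xd‖ ≤ Lproj * (Le * ‖ud‖ + e 0) :=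
    calc ‖proj xcl - xd‖ ≤ Lproj * ‖xcl - emb xd‖ :=
          norm_sub_le_of_lipschitz_of_rightInverse hproj hright xcl xd
      _ ≤ Lproj * (Le * ‖ud‖ + e 0) :=
          mul_le_mul_of_nonneg_left (htrack.trans (le_mul_norm_add_of_abs_sub_le he ud)) hLproj
  intro i
  exact (real_inner_le_add_mul_norm_of_norm_sub_le (c i) hdist).trans (hcon i)

/-- Lemma 2 (state constraint satisfaction): with Euclidean norms on the full and planning
state spaces and the sup norm on the planning input space, if the projection `proj` (the
paper's `Π`) is Lipschitz, `Ψ` (here `emb`) is a right inverse of `proj`, the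
tracking-certificate bound `e` is nonnegative and Lipschitz, and the closed-loop state
satisfies `‖x_cl - Ψ(x_d)‖ ≤ e(u_d)`, then tightening each state polytope constraint
`⟨c_i, ·⟩ ≤ d_i` by `L_Π (L_e ‖u_d‖ + e(0)) ‖c_i‖` at `x_d` guarantees
`⟨c_i, proj(x_cl)⟩ ≤ d_i` for every `i`. -/
theorem state_constraint_satisfaction
    {N n m k : ℕ}
    (proj : EuclideanSpace ℝ (Fin N) → EuclideanSpace ℝ (Fin n))
    (emb : EuclideanSpace ℝ (Fin n) → EuclideanSpace ℝ (Fin N))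
    (e : (Fin m → ℝ) → ℝ)
    (Lproj Le : ℝ) (hLproj : 0 ≤ Lproj) (hLe : 0 ≤ Le)
    (hproj : ∀ x y, ‖proj x - proj y‖ ≤ Lproj * ‖x - y‖)
    (hright : ∀ y, proj (emb y) = y)
    (he_nonneg : ∀ u, 0 ≤ e u)
    (he : ∀ u u', |e u - e u'| ≤ Le * ‖u - u'‖)
    (xcl : EuclideanSpace ℝ (Fin N)) (xd : EuclideanSpace ℝ (Fin n)) (ud : Fin m → ℝ)
    (htrack : ‖xcl - emb xd‖ ≤ e ud)
    (c : Fin k → EuclideanSpace ℝ (Fin n)) (d : Fin k → ℝ)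
    (hcon : ∀ i, ⟪c i, xd⟫ + Lproj * (Le * ‖ud‖ + e 0) * ‖c i‖ ≤ d i) :
    ∀ i, ⟪c i, proj xcl⟫ ≤ d i :=
  state_constraint_satisfaction_general proj emb e Lproj Le hLproj hproj hright he xcl xd ud htrack
    c d hcon
end
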